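/- arXiv:2410.22542 — 9 statements merged into one kernel-verified Lean document; each statement's English description precedes it below -/
import Mathlib

section
/- Let d > 2, n < 3d-2, and let I, J be subsets of {1,...,n} with |I| = d and |J| = n-2d+2. With ε as defined (ε(0)=1, ε(t) = -t·ε(t-1)/(d-t)), the sum over i ∈ I of ε(|(I \ {i}) ∩ J|) equals d if I ∩ J = ∅, and equals 0 otherwise. -/
theorem epsilon_sum (d n : ℕ) (hd : 2 < d) (hn : n < 3 * d - 2) (ε : ℕ → ℚ)
    (hε0 : ε 0 = 1)
    (hεrec : ∀ t : ℕ, 1 ≤ t → t ≤ d - 1 →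
      ε t = -(t : ℚ) * ε (t - 1) / ((d : ℚ) - (t : ℚ)))
    (I J : Finset ℕ) (hI : I ⊆ Finset.Icc 1 n) (hJ : J ⊆ Finset.Icc 1 n)
    (hIcard : I.card = d) (hJcard : (J.card : ℤ) = (n : ℤ) - 2 * d + 2) :
    (∑ i ∈ I, ε (((I.erase i) ∩ J).card)) =
      if Disjoint I J then (d : ℚ) else 0 := by
  set k := (I ∩ J).card with hk
  -- k ≤ d - 1
  have hkJ : k ≤ J.card := Finset.card_le_card (Finset.inter_subset_right)
  have hkd : k ≤ d - 1 := by
    have : (J.card : ℤ) ≤ (d : ℤ) - 1 := by omega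
    omega
  have hkd' : k < d := by omega
  -- split the sum
  have hsplit : (∑ i ∈ I ∩ J, ε (((I.erase i) ∩ J).card))
      + (∑ i ∈ I \ J, ε (((I.erase i) ∩ J).card))
      = ∑ i ∈ I, ε (((I.erase i) ∩ J).card) :=
    Finset.sum_inter_add_sum_sdiff I J _
  have h1 : (∑ i ∈ I ∩ J, ε (((I.erase i) ∩ J).card)) = (k : ℚ) * ε (k - 1) := by
    rw [Finset.sum_congr rfl (fun i hi => ?_), Finset.sum_const, nsmul_eq_mul]
    have : (I.erase i) ∩ J = (I ∩ J).erase i := Finset.erase_inter i I J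
    rw [this, Finset.card_erase_of_mem hi]
  have h2 : (∑ i ∈ I \ J, ε (((I.erase i) ∩ J).card)) = ((d - k : ℕ) : ℚ) * ε k := by
    have hc : (I \ J).card = d - k := by
      have := Finset.card_sdiff_add_card_inter I J
      omega
    rw [Finset.sum_congr rfl (fun i hi => ?_), Finset.sum_const, nsmul_eq_mul, hc]
    have hiJ : i ∉ J := (Finset.mem_sdiff.mp hi).2
    have : (I.erase i) ∩ J = I ∩ J := by
      rw [Finset.erase_inter, Finset.erase_eq_of_notMem]
      simp [hiJ]
    rw [this]
  rw [← hsplit, h1, h2]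
  by_cases hdisj : Disjoint I J
  · have hk0 : k = 0 := by
      have h : I ∩ J = ∅ := Finset.disjoint_iff_inter_eq_empty.mp hdisj
      simp [hk, h]
    rw [if_pos hdisj, hk0]
    simp [hε0]
  · have hk1 : 1 ≤ k := by
      rcases Nat.eq_zero_or_pos k with h | h
      · exfalso
        exact hdisj (Finset.disjoint_iff_inter_eq_empty.mpr (Finset.card_eq_zero.mp h))
      · exact h
    simp only [hdisj, if_false]
    have hεk := hεrec k hk1 hkd
    have hdk : ((d : ℚ) - (k : ℚ)) ≠ 0 := by
      have : (k : ℚ) < (d : ℚ) := by exact_mod_cast hkd'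
      linarith
    have hcast : ((d - k : ℕ) : ℚ) = (d : ℚ) - (k : ℚ) := by
      push_cast [Nat.cast_sub (le_of_lt hkd')]
      ring
    rw [hεk, hcast]
    field_simp
    ring
end

section
/- Define ψ(0)=1, ψ(1) = -2/(d-2), and for 2 ≤ t ≤ d-2 define ψ(t) by the relation C(d-t,2)·ψ(t) + t(d-t)·ψ(t-1) + C(t,2)·ψ(t-2) = 0. Let I, L be subsets of {1,...,n} with |I| = d and |L| = d-2. Then the sum over unordered pairs {u,v} ⊆ I of ψ(|(I \ {u,v}) ∩ L|) equals C(d,2) if I ∩ L = ∅, and equals 0 otherwise. -/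
/-!
Sort the pairs `p ⊆ I` by `j = |p ∩ L|`. Writing `k = |I ∩ L|`, the summand is `ψ (k - j)` and
there are `C(k, j) · C(d - k, 2 - j)` such pairs, so the sum equals
`C(d - k, 2) ψ(k) + k (d - k) ψ(k - 1) + C(k, 2) ψ(k - 2)`. For `k = 0` this is `C(d, 2)`; for
`1 ≤ k ≤ d - 2` it is the defining recurrence, which at `k = 1` is exactly the choice of `ψ(1)`.
-/

namespace Finset

variable {α : Type*} [DecidableEq α] {S I : Finset α}

theorem card_filter_powersetCard_card_inter (hS : S ⊆ I) {m j : ℕ} (hj : j ≤ m) :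
    #{p ∈ I.powersetCard m | #(p ∩ S) = j} = (#S).choose j * (#(I \ S)).choose (m - j) := by
  rw [← card_powersetCard, ← card_powersetCard, ← card_product]
  refine card_nbij' (fun p ↦ (p ∩ S, p \ S)) (fun q ↦ q.1 ∪ q.2) ?_ ?_ ?_ ?_
  · intro p hp
    simp only [coe_filter, mem_powersetCard, Set.mem_ofPred_eq, coe_product, Set.mem_prod,
      mem_coe] at hp ⊢
    have := card_sdiff_add_card_inter p S
    refine ⟨⟨inter_subset_right, hp.2⟩, sdiff_subset_sdiff hp.1.1 subset_rfl, by omega⟩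
  · rintro ⟨a, b⟩ hab
    simp only [coe_product, Set.mem_prod, mem_coe, mem_powersetCard, coe_filter,
      Set.mem_ofPred_eq] at hab ⊢
    obtain ⟨⟨haS, rfl⟩, hbI, hb⟩ := hab
    have hdisj : Disjoint a b := disjoint_of_subset_left haS (subset_sdiff.1 hbI).2.symm
    refine ⟨⟨union_subset (haS.trans hS) (hbI.trans sdiff_subset), ?_⟩, ?_⟩
    · rw [card_union_of_disjoint hdisj]; omega
    · rw [union_inter_distrib_right, inter_eq_left.2 haS,
        disjoint_iff_inter_eq_empty.1 (subset_sdiff.1 hbI).2, union_empty]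
  · exact fun p _ ↦ sup_inf_sdiff p S
  · rintro ⟨a, b⟩ hab
    simp only [coe_product, Set.mem_prod, mem_coe, mem_powersetCard] at hab
    have hbS := (subset_sdiff.1 hab.2.1).2
    ext x <;> simp only [mem_inter, mem_union, mem_sdiff] <;> grind [disjoint_left]

theorem sum_powersetCard_apply_card_inter {β : Type*} [AddCommMonoid β] (f : ℕ → β)
    (hS : S ⊆ I) (m : ℕ) :
    ∑ p ∈ I.powersetCard m, f #(p ∩ S) =
      ∑ j ∈ range (m + 1), ((#S).choose j * (#(I \ S)).choose (m - j)) • f j := by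
  have hmaps : ∀ p ∈ I.powersetCard m, #(p ∩ S) ∈ range (m + 1) := fun p hp ↦
    mem_range_succ_iff.2 <| (card_le_card inter_subset_left).trans (mem_powersetCard.1 hp).2.le
  rw [← sum_fiberwise_of_maps_to hmaps]
  refine sum_congr rfl fun j hj ↦ ?_
  rw [← card_filter_powersetCard_card_inter hS (mem_range_succ_iff.1 hj), ← sum_const]
  exact sum_congr rfl fun p hp ↦ by rw [(mem_filter.1 hp).2]

end Finset

open Finset

theorem psi_recurrence_of_one_le {d : ℕ} {ψ : ℕ → ℚ}
    (hψ0 : ψ 0 = 1) (hψ1 : ψ 1 = -2 / ((d : ℚ) - 2))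
    (hψrec : ∀ t : ℕ, 2 ≤ t → t ≤ d - 2 →
      ((Nat.choose (d - t) 2 : ℚ)) * ψ t + (t : ℚ) * ((d : ℚ) - (t : ℚ)) * ψ (t - 1) +
        ((Nat.choose t 2 : ℚ)) * ψ (t - 2) = 0)
    {t : ℕ} (ht1 : 1 ≤ t) (htd : t ≤ d - 2) :
    ((Nat.choose (d - t) 2 : ℚ)) * ψ t + (t : ℚ) * ((d : ℚ) - (t : ℚ)) * ψ (t - 1) +
      ((Nat.choose t 2 : ℚ)) * ψ (t - 2) = 0 := by
  obtain rfl | ht2 := ht1.eq_or_lt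
  · have hd : (3 : ℚ) ≤ d := by exact_mod_cast (by omega : 3 ≤ d)
    rw [hψ0, hψ1, Nat.cast_choose_two, Nat.cast_sub (by omega),
      Nat.choose_eq_zero_of_lt one_lt_two]
    field_simp [show (d : ℚ) - 2 ≠ 0 by linarith]
    ring
  · exact hψrec t ht2 htd

theorem psi_sum_general (d : ℕ) (ψ : ℕ → ℚ)
    (hψ0 : ψ 0 = 1) (hψ1 : ψ 1 = -2 / ((d : ℚ) - 2))
    (hψrec : ∀ t : ℕ, 2 ≤ t → t ≤ d - 2 →
      ((Nat.choose (d - t) 2 : ℚ)) * ψ t + (t : ℚ) * ((d : ℚ) - (t : ℚ)) * ψ (t - 1) +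
        ((Nat.choose t 2 : ℚ)) * ψ (t - 2) = 0)
    (I L : Finset ℕ)
    (hIcard : I.card = d) (hLcard : L.card = d - 2) :
    (∑ p ∈ Finset.powersetCard 2 I, ψ (((I \ p) ∩ L).card)) =
      if Disjoint I L then (Nat.choose d 2 : ℚ) else 0 := by
  have hkd : #(I ∩ L) ≤ d - 2 := hLcard ▸ card_le_card inter_subset_right
  have hcard (p : Finset ℕ) : #((I \ p) ∩ L) = #(I ∩ L) - #(p ∩ (I ∩ L)) := by
    rw [← card_sdiff, sdiff_inter_right_comm]
  simp_rw [hcard]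
  rw [sum_powersetCard_apply_card_inter (fun j ↦ ψ (#(I ∩ L) - j)) inter_subset_left,
    card_sdiff_of_subset inter_subset_left, hIcard]
  simp only [sum_range_succ, sum_range_zero]
  split_ifs with hdisj
  · simp [disjoint_iff_inter_eq_empty.1 hdisj, hψ0]
  · have hk1 : 1 ≤ #(I ∩ L) := one_le_card.2 (not_disjoint_iff_nonempty_inter.1 hdisj)
    convert psi_recurrence_of_one_le hψ0 hψ1 hψrec hk1 hkd using 1
    simp [nsmul_eq_mul, Nat.cast_sub (hkd.trans (Nat.sub_le d 2))]

theorem psi_sum (d n : ℕ) (hd : 2 < d) (ψ : ℕ → ℚ)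
    (hψ0 : ψ 0 = 1) (hψ1 : ψ 1 = -2 / ((d : ℚ) - 2))
    (hψrec : ∀ t : ℕ, 2 ≤ t → t ≤ d - 2 →
      ((Nat.choose (d - t) 2 : ℚ)) * ψ t + (t : ℚ) * ((d : ℚ) - (t : ℚ)) * ψ (t - 1) +
        ((Nat.choose t 2 : ℚ)) * ψ (t - 2) = 0)
    (I L : Finset ℕ) (hI : I ⊆ Finset.Icc 1 n) (hL : L ⊆ Finset.Icc 1 n)
    (hIcard : I.card = d) (hLcard : L.card = d - 2) :
    (∑ p ∈ Finset.powersetCard 2 I, ψ (((I \ p) ∩ L).card)) =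
      if Disjoint I L then (Nat.choose d 2 : ℚ) else 0 :=
  psi_sum_general d ψ hψ0 hψ1 hψrec I L hIcard hLcard
end

section
/- Let I ⊆ F[x_1,...,x_n] be a monomial ideal, ℓ = x_1 + ... + x_n, and let Q = Σ_μ a_μ μ be a homogeneous polynomial of degree d-1 (sum over monomials μ of degree d-1). If ℓ·Q ∈ I, then for every monomial M of degree 2d-1 with M ∉ I, one has a_μ = 0 for every degree-(d-1) monomial μ dividing M. -/
open MvPolynomial
namespace MIKL
variable {F : Type*} [Field F] {n : ℕ}

def deg (μ : Fin n →₀ ℕ) : ℕ := ∑ i, μ i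

open Classical in
noncomputable def Eop (M : Fin n →₀ ℕ) (v : (Fin n →₀ ℕ) → F) : (Fin n →₀ ℕ) → F :=
  fun ν => if ν ≤ M then ∑ i, (if 0 < ν i then v (ν - Finsupp.single i 1) else 0) else 0

open Classical in
noncomputable def Fop (M : Fin n →₀ ℕ) (v : (Fin n →₀ ℕ) → F) : (Fin n →₀ ℕ) → F :=
  fun μ => if μ ≤ M then
    ∑ i, (((μ i + 1) * (M i - μ i) : ℕ) : F) * v (μ + Finsupp.single i 1) else 0

lemma deg_add_single (μ : Fin n →₀ ℕ) (i : Fin n) :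
    deg (μ + Finsupp.single i 1) = deg μ + 1 := by
  unfold deg
  simp [Finsupp.add_apply, Finset.sum_add_distrib, Finsupp.single_apply, Finset.sum_ite_eq]

lemma sub_single_add {ν : Fin n →₀ ℕ} {i : Fin n} (h : 0 < ν i) :
    ν - Finsupp.single i 1 + Finsupp.single i 1 = ν :=
  tsub_add_cancel_of_le (Finsupp.single_le_iff.2 h)

lemma add_single_sub (μ : Fin n →₀ ℕ) (i : Fin n) :
    μ + Finsupp.single i 1 - Finsupp.single i 1 = μ := by
  ext k
  simp [Finsupp.tsub_apply, Finsupp.add_apply]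

lemma add_sub_swap {i j : Fin n} (hij : j ≠ i) (ν : Fin n →₀ ℕ) :
    ν + Finsupp.single i 1 - Finsupp.single j 1
      = ν - Finsupp.single j 1 + Finsupp.single i 1 := by
  ext k
  simp only [Finsupp.tsub_apply, Finsupp.add_apply, Finsupp.single_apply]
  split_ifs with h1 h2
  · exact absurd (h1.trans h2.symm).symm hij
  · omega
  · omega
  · omega

lemma add_single_le {μ M : Fin n →₀ ℕ} {i : Fin n} (hμ : μ ≤ M) (hi : μ i < M i) :
    μ + Finsupp.single i 1 ≤ M := by
  intro k
  simp only [Finsupp.coe_add, Pi.add_apply, Finsupp.single_apply]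
  rcases eq_or_ne i k with rfl | h
  · simpa using hi
  · simpa [h] using Finsupp.le_def.mp hμ k

lemma Eop_eq_zero {M : Fin n →₀ ℕ} {v : (Fin n →₀ ℕ) → F} (hv : ∀ μ, v μ = 0)
    (ν : Fin n →₀ ℕ) : Eop M v ν = 0 := by
  unfold Eop; split <;> simp [hv]

lemma comm_lemma (M : Fin n →₀ ℕ) (v : (Fin n →₀ ℕ) → F) {ν : Fin n →₀ ℕ} (hν : ν ≤ M) :
    Fop M (Eop M v) ν
      = Eop M (Fop M v) ν + ((∑ i, (M i : F)) - 2 * (deg ν : F)) * v ν := by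
  classical
  have hle : ∀ i, ν i ≤ M i := fun i => Finsupp.le_def.mp hν i
  have L1 : Fop M (Eop M v) ν = ∑ i, ∑ j,
      ((((ν i + 1) * (M i - ν i) : ℕ) : F) *
        (if 0 < ((ν + Finsupp.single i 1 : Fin n →₀ ℕ)) j then
          v (ν + Finsupp.single i 1 - Finsupp.single j 1) else 0)) := by
    unfold Fop
    rw [if_pos hν]
    refine Finset.sum_congr rfl fun i _ => ?_
    rcases lt_or_eq_of_le (hle i) with hi | hi
    · unfold Eop
      rw [if_pos (add_single_le hν hi), Finset.mul_sum]
    · have h0 : ((ν i + 1) * (M i - ν i) : ℕ) = 0 := by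
        rw [hi, Nat.sub_self, Nat.mul_zero]
      rw [h0]
      simp
  have L2 : Eop M (Fop M v) ν = ∑ i, ∑ j,
      (if 0 < ν j then
        (((((ν - Finsupp.single j 1 : Fin n →₀ ℕ)) i + 1) * (M i - ((ν - Finsupp.single j 1 : Fin n →₀ ℕ)) i) : ℕ) : F) *
          v (ν - Finsupp.single j 1 + Finsupp.single i 1) else 0) := by
    unfold Eop
    rw [if_pos hν, Finset.sum_comm]
    refine Finset.sum_congr rfl fun j _ => ?_
    by_cases hj : 0 < ν j
    · rw [if_pos hj]
      unfold Fop
      rw [if_pos (le_trans tsub_le_self hν)]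
      simp only [if_pos hj]
    · simp [hj]
  rw [L1, L2]
  have R : ((∑ i, (M i : F)) - 2 * (deg ν : F)) * v ν
      = ∑ i, (((M i : F) - 2 * (ν i : F)) * v ν) := by
    rw [← Finset.sum_mul]
    congr 1
    rw [deg]
    push_cast
    rw [Finset.mul_sum, ← Finset.sum_sub_distrib]
  rw [R, ← Finset.sum_add_distrib]
  refine Finset.sum_congr rfl fun i _ => ?_
  have key : ∀ j, ((((ν i + 1) * (M i - ν i) : ℕ) : F) *
        (if 0 < ((ν + Finsupp.single i 1 : Fin n →₀ ℕ)) j then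
          v (ν + Finsupp.single i 1 - Finsupp.single j 1) else 0))
      = (if 0 < ν j then
        (((((ν - Finsupp.single j 1 : Fin n →₀ ℕ)) i + 1) * (M i - ((ν - Finsupp.single j 1 : Fin n →₀ ℕ)) i) : ℕ) : F) *
          v (ν - Finsupp.single j 1 + Finsupp.single i 1) else 0)
        + (if j = i then ((M i : F) - 2 * (ν i : F)) * v ν else 0) := by
    intro j
    by_cases hji : j = i
    · subst hji
      have h1 : ((ν + Finsupp.single j 1 : Fin n →₀ ℕ)) j = ν j + 1 := by
        simp [Finsupp.add_apply]
      rw [h1, if_pos (Nat.succ_pos _), add_single_sub, if_pos rfl]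
      by_cases hj0 : 0 < ν j
      · rw [if_pos hj0, sub_single_add hj0]
        have h2 : ((ν - Finsupp.single j 1 : Fin n →₀ ℕ)) j = ν j - 1 := by
          simp [Finsupp.tsub_apply]
        rw [h2]
        have hb : ν j ≤ M j := hle j
        have hc : (((ν j + 1) * (M j - ν j) : ℕ) : F)
            = (((ν j - 1 + 1) * (M j - (ν j - 1)) : ℕ) : F)
              + ((M j : F) - 2 * (ν j : F)) := by
          have e1 : ν j - 1 + 1 = ν j := by omega
          have e2 : M j - (ν j - 1) = (M j - ν j) + 1 := by omega
          rw [e1, e2]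
          have e3 : ((M j - ν j : ℕ) : F) = (M j : F) - (ν j : F) := by
            exact_mod_cast Nat.cast_sub hb
          push_cast [e3]
          ring
        rw [hc]; ring
      · rw [if_neg hj0]
        have hz : ν j = 0 := by omega
        rw [hz]
        simp only [Nat.sub_zero, zero_add, one_mul]
        push_cast
        ring
    · have h1 : ((ν + Finsupp.single i 1 : Fin n →₀ ℕ)) j = ν j := by
        simp [Finsupp.add_apply, Finsupp.single_apply, Ne.symm hji]
      have h2 : ((ν - Finsupp.single j 1 : Fin n →₀ ℕ)) i = ν i := by
        simp [Finsupp.tsub_apply, Finsupp.single_apply, hji]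
      rw [h1, h2, add_sub_swap hji, if_neg hji, mul_ite, mul_zero, add_zero]
  rw [Finset.sum_congr rfl fun j _ => key j, Finset.sum_add_distrib]
  congr 1
  simp

lemma Fop_congr_smul {M : Fin n →₀ ℕ} {w u : (Fin n →₀ ℕ) → F} {c : F}
    (h : ∀ ν, w ν = c * u ν) (μ : Fin n →₀ ℕ) :
    Fop M w μ = c * Fop M u μ := by
  unfold Fop
  split
  · rw [Finset.mul_sum]
    refine Finset.sum_congr rfl fun i _ => ?_
    rw [h]; ring
  · rw [mul_zero]

variable [CharZero F]

lemma key_induction (M : Fin n →₀ ℕ) {N : ℕ} (hNM : (∑ i, M i) = N) :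
    ∀ k : ℕ, 2 * k < N → ∀ (t : ℕ) (v : (Fin n →₀ ℕ) → F),
      (∀ μ, v μ ≠ 0 → μ ≤ M ∧ deg μ = k) →
      (∀ μ, μ ≤ M → Fop M (Eop M v) μ + (t : F) * v μ = 0) →
      ∀ μ, v μ = 0 := by
  have hMF : (∑ i, (M i : F)) = (N : F) := by
    rw [← hNM]; exact (Nat.cast_sum _ _).symm
  intro k
  induction k with
  | zero =>
    intro hk t v hsupp hH
    have hw : ∀ μ, Fop M v μ = 0 := by
      intro μ
      unfold Fop
      split
      · refine Finset.sum_eq_zero fun i _ => ?_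
        rcases eq_or_ne (v (μ + Finsupp.single i 1)) 0 with h | h
        · rw [h, mul_zero]
        · exfalso
          have h2 := (hsupp _ h).2
          rw [deg_add_single] at h2
          omega
      · rfl
    intro μ
    by_cases hμ : μ ≤ M ∧ deg μ = 0
    · have hc := comm_lemma M v hμ.1
      rw [Eop_eq_zero hw, hμ.2, hMF] at hc
      have hH' := hH μ hμ.1
      rw [hc] at hH'
      have h3 : ((N + t : ℕ) : F) * v μ = 0 := by
        push_cast at hH' ⊢
        linear_combination hH'
      have hne : ((N + t : ℕ) : F) ≠ 0 := Nat.cast_ne_zero.2 (by omega)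
      exact (mul_eq_zero.mp h3).resolve_left hne
    · rcases eq_or_ne (v μ) 0 with h | h
      · exact h
      · exact absurd (hsupp μ h) hμ
  | succ k ih =>
    intro hk t v hsupp hH
    have hskipos : 2 * (k + 1) ≤ N := le_of_lt hk
    set s : ℕ := t + (N - 2 * (k + 1)) with hs
    have hwsupp : ∀ μ, Fop M v μ ≠ 0 → μ ≤ M ∧ deg μ = k := by
      intro μ hμ
      by_cases hle : μ ≤ M
      · refine ⟨hle, ?_⟩
        unfold Fop at hμ
        rw [if_pos hle] at hμ
        obtain ⟨i, _, hi⟩ := Finset.exists_ne_zero_of_sum_ne_zero hμ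
        have hv : v (μ + Finsupp.single i 1) ≠ 0 := fun h0 => hi (by rw [h0, mul_zero])
        have h2 := (hsupp _ hv).2
        rw [deg_add_single] at h2
        omega
      · exfalso
        unfold Fop at hμ
        rw [if_neg hle] at hμ
        exact hμ rfl
    have hEw : ∀ ν, Eop M (Fop M v) ν = -(s : F) * v ν := by
      intro ν
      by_cases hν : ν ≤ M
      · by_cases hdeg : deg ν = k + 1
        · have hc := comm_lemma M v hν
          rw [hdeg, hMF] at hc
          have hH' := hH ν hν
          rw [hc] at hH'
          rw [hs]
          push_cast [Nat.cast_sub hskipos] at hH' ⊢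
          linear_combination hH'
        · have hv0 : v ν = 0 := by
            rcases eq_or_ne (v ν) 0 with h | h
            · exact h
            · exact absurd ((hsupp ν h).2) hdeg
          rw [hv0, mul_zero]
          unfold Eop
          rw [if_pos hν]
          refine Finset.sum_eq_zero fun j _ => ?_
          by_cases hj : 0 < ν j
          · rw [if_pos hj]
            rcases eq_or_ne (Fop M v (ν - Finsupp.single j 1)) 0 with h | h
            · exact h
            · exfalso
              have h2 := (hwsupp _ h).2
              have h3 : deg ν = k + 1 := by
                conv_lhs => rw [← sub_single_add hj]
                rw [deg_add_single, h2]
              exact hdeg h3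
          · rw [if_neg hj]
      · unfold Eop
        rw [if_neg hν]
        have hv0 : v ν = 0 := by
          rcases eq_or_ne (v ν) 0 with h | h
          · exact h
          · exact absurd ((hsupp ν h).1) hν
        rw [hv0, mul_zero]
    have hwH : ∀ μ, μ ≤ M → Fop M (Eop M (Fop M v)) μ + (s : F) * Fop M v μ = 0 := by
      intro μ _
      rw [Fop_congr_smul hEw μ]
      ring
    have hw0 : ∀ μ, Fop M v μ = 0 := ih (by omega) s (Fop M v) hwsupp hwH
    intro μ
    have hEw' := hEw μ
    rw [Eop_eq_zero hw0] at hEw'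
    have hsne : (s : F) ≠ 0 := Nat.cast_ne_zero.2 (by omega)
    have h2 : (s : F) * v μ = 0 := by linear_combination hEw'
    exact (mul_eq_zero.mp h2).resolve_left hsne

end MIKL


theorem monomial_ideal_kernel_lemma (F : Type*) [Field F] [CharZero F]
    (n d : ℕ) (hd : 1 ≤ d) (I : Ideal (MvPolynomial (Fin n) F))
    (hmono : ∃ S : Set (Fin n →₀ ℕ),
      I = Ideal.span ((fun m => (monomial m (1 : F) : MvPolynomial (Fin n) F)) '' S))
    (Q : MvPolynomial (Fin n) F)
    (hQ : Q ∈ homogeneousSubmodule (Fin n) F (d - 1))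
    (hLQ : (∑ i : Fin n, X i) * Q ∈ I) :
    ∀ M : Fin n →₀ ℕ, (∑ i : Fin n, M i) = 2 * d - 1 →
      (monomial M (1 : F) : MvPolynomial (Fin n) F) ∉ I →
      ∀ μ : Fin n →₀ ℕ, (∑ i : Fin n, μ i) = d - 1 → μ ≤ M →
        Q.coeff μ = 0 := by
  classical
  intro M hdegM hMI μ hdegμ hμM
  obtain ⟨S, hS⟩ := hmono
  subst hS
  have hnotdvd : ¬ ∃ s ∈ S, s ≤ M := by
    rintro ⟨s, hsS, hsM⟩
    apply hMI
    rw [mem_ideal_span_monomial_image]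
    intro xi hxi
    have hxiM : xi = M := by
      simpa [MvPolynomial.support_monomial] using hxi
    exact ⟨s, hsS, hxiM ▸ hsM⟩
  have hdiv : ∀ ν, ν ≤ M → MvPolynomial.coeff ν ((∑ i : Fin n, X i) * Q) = 0 := by
    intro ν hν
    by_contra h
    obtain ⟨s, hsS, hsν⟩ :=
      mem_ideal_span_monomial_image.mp hLQ ν (MvPolynomial.mem_support_iff.mpr h)
    exact hnotdvd ⟨s, hsS, hsν.trans hν⟩
  set v : (Fin n →₀ ℕ) → F :=
    fun μ' => if μ' ≤ M ∧ MIKL.deg μ' = d - 1 then Q.coeff μ' else 0 with hv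
  have hsupp : ∀ μ', v μ' ≠ 0 → μ' ≤ M ∧ MIKL.deg μ' = d - 1 := by
    intro μ' h
    by_contra hcon
    exact h (by rw [hv]; simp only; rw [if_neg hcon])
  have hEv : ∀ ν, MIKL.Eop M v ν = 0 := by
    intro ν
    unfold MIKL.Eop
    split
    case isFalse => rfl
    case isTrue hν =>
      by_cases hdν : MIKL.deg ν = d
      · have hterm : ∀ i : Fin n, (if 0 < ν i then v (ν - Finsupp.single i 1) else 0)
            = (if i ∈ ν.support then Q.coeff (ν - Finsupp.single i 1) else 0) := by
          intro i
          by_cases hi : 0 < ν i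
          · rw [if_pos hi, if_pos (Finsupp.mem_support_iff.2 (by omega))]
            rw [hv]; simp only
            rw [if_pos ?_]
            refine ⟨le_trans tsub_le_self hν, ?_⟩
            have hds := MIKL.deg_add_single (ν - Finsupp.single i 1) i
            rw [MIKL.sub_single_add hi] at hds
            omega
          · rw [if_neg hi, if_neg (by simp only [Finsupp.mem_support_iff]; omega)]
        rw [Finset.sum_congr rfl (fun i _ => hterm i)]
        have hco : MvPolynomial.coeff ν ((∑ i : Fin n, X i) * Q)
            = ∑ i : Fin n, (if i ∈ ν.support then Q.coeff (ν - Finsupp.single i 1) else 0) := by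
          rw [mul_comm, Finset.mul_sum, MvPolynomial.coeff_sum]
          exact Finset.sum_congr rfl fun i _ => MvPolynomial.coeff_mul_X' ν i Q
        rw [← hco]
        exact hdiv ν hν
      · refine Finset.sum_eq_zero fun i _ => ?_
        rw [hv]; simp only
        by_cases hi : 0 < ν i
        · rw [if_pos hi, if_neg ?_]
          rintro ⟨-, hdeg⟩
          have hds := MIKL.deg_add_single (ν - Finsupp.single i 1) i
          rw [MIKL.sub_single_add hi] at hds
          omega
        · rw [if_neg hi]
  have hH : ∀ μ', μ' ≤ M → MIKL.Fop M (MIKL.Eop M v) μ' + ((0 : ℕ) : F) * v μ' = 0 := by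
    intro μ' _
    have hz := MIKL.Fop_congr_smul (M := M) (w := MIKL.Eop M v) (u := v) (c := 0)
      (fun ν => by rw [hEv]; ring) μ'
    rw [hz]
    push_cast
    ring
  have hv0 := MIKL.key_induction M hdegM (d - 1) (by omega) 0 v hsupp hH μ
  rw [hv] at hv0
  simp only at hv0
  rw [if_pos ⟨hμM, by unfold MIKL.deg; exact hdegμ⟩] at hv0
  exact hv0
end

section
/- For n ≥ 2d-2 ≥ 2, the number of squarefree monomials of degree d in x_1,...,x_n that are not divisible by any squarefree monomial of degree k in the variables x_1,...,x_{2k-2} for any 2 ≤ k ≤ d equals C(n,d) - C(n,d-2). -/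
open scoped Classical

noncomputable def F (n d : ℕ) : ℕ :=
  ((Finset.powersetCard d (Finset.Icc 1 n)).filter fun S =>
      ∀ k ∈ Finset.Icc 2 d, (S ∩ Finset.Icc 1 (2 * k - 2)).card ≤ k - 1).card

lemma F_base (d : ℕ) (hd : 2 ≤ d) : F (2 * d - 2) d = 0 := by
  rw [F, Finset.filter_congr_decidable, Finset.card_eq_zero, Finset.filter_eq_empty_iff]
  intro S hS
  rw [Finset.mem_powersetCard] at hS
  push_neg
  refine ⟨d, Finset.mem_Icc.mpr ⟨hd, le_rfl⟩, ?_⟩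
  have : S ∩ Finset.Icc 1 (2 * d - 2) = S := Finset.inter_eq_left.mpr hS.1
  rw [this, hS.2]
  omega

lemma F_one (n : ℕ) : F n 1 = n := by
  rw [F, Finset.filter_congr_decidable]
  have h : Finset.Icc 2 1 = (∅ : Finset ℕ) := by decide
  rw [Finset.filter_true_of_mem (by intro S _ k hk; rw [h] at hk; exact absurd hk (Finset.notMem_empty k))]
  rw [Finset.card_powersetCard, Nat.card_Icc]
  simp [Nat.choose_one_right]

lemma F_rec (n d : ℕ) (hd : 2 ≤ d) (hn : 2 * d ≤ n + 2) :
    F (n + 1) d = F n d + F n (d - 1) := by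
  simp only [F, Finset.filter_congr_decidable]
  rw [← Finset.card_filter_add_card_filter_not (p := fun S => (n+1) ∈ S)]
  have h1 : (((Finset.powersetCard d (Finset.Icc 1 (n+1))).filter fun S =>
        ∀ k ∈ Finset.Icc 2 d, (S ∩ Finset.Icc 1 (2 * k - 2)).card ≤ k - 1).filter
        fun S => ¬ (n+1) ∈ S) =
      ((Finset.powersetCard d (Finset.Icc 1 n)).filter fun S =>
        ∀ k ∈ Finset.Icc 2 d, (S ∩ Finset.Icc 1 (2 * k - 2)).card ≤ k - 1) := by
    ext S
    simp only [Finset.mem_filter, Finset.mem_powersetCard]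
    constructor
    · rintro ⟨⟨⟨hsub, hcard⟩, hP⟩, hnm⟩
      refine ⟨⟨fun x hx => ?_, hcard⟩, hP⟩
      have h := hsub hx
      have hne : x ≠ n + 1 := fun e => hnm (e ▸ hx)
      rw [Finset.mem_Icc] at h ⊢; omega
    · rintro ⟨⟨hsub, hcard⟩, hP⟩
      refine ⟨⟨⟨fun x hx => ?_, hcard⟩, hP⟩, fun h => ?_⟩
      · have h := hsub hx; rw [Finset.mem_Icc] at h ⊢; omega
      · have := hsub h; rw [Finset.mem_Icc] at this; omega
  have h2 : (((Finset.powersetCard d (Finset.Icc 1 (n+1))).filter fun S =>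
        ∀ k ∈ Finset.Icc 2 d, (S ∩ Finset.Icc 1 (2 * k - 2)).card ≤ k - 1).filter
        fun S => (n+1) ∈ S).card =
      ((Finset.powersetCard (d-1) (Finset.Icc 1 n)).filter fun S =>
        ∀ k ∈ Finset.Icc 2 (d-1), (S ∩ Finset.Icc 1 (2 * k - 2)).card ≤ k - 1).card := by
    apply Finset.card_bij (fun S _ => S.erase (n+1))
    · intro S hS
      simp only [Finset.mem_filter, Finset.mem_powersetCard] at hS ⊢
      obtain ⟨⟨⟨hsub, hcard⟩, hP⟩, hmem⟩ := hS
      refine ⟨⟨fun x hx => ?_, ?_⟩, fun k hk => ?_⟩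
      · have hx' := hsub (Finset.mem_of_mem_erase hx)
        have hne := Finset.ne_of_mem_erase hx
        rw [Finset.mem_Icc] at hx' ⊢; omega
      · rw [Finset.card_erase_of_mem hmem, hcard]
      · rw [Finset.mem_Icc] at hk
        calc (S.erase (n+1) ∩ Finset.Icc 1 (2*k-2)).card
            ≤ (S ∩ Finset.Icc 1 (2*k-2)).card :=
              Finset.card_le_card
                (Finset.inter_subset_inter (Finset.erase_subset _ _) (Finset.Subset.refl _))
          _ ≤ k - 1 := hP k (Finset.mem_Icc.mpr ⟨hk.1, by omega⟩)
    · intro S hS T hT h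
      simp only [Finset.mem_filter] at hS hT
      rw [← Finset.insert_erase hS.2, ← Finset.insert_erase hT.2, h]
    · intro T hT
      simp only [Finset.mem_filter, Finset.mem_powersetCard] at hT
      obtain ⟨⟨hsub, hcard⟩, hP⟩ := hT
      have hnot : (n+1) ∉ T := fun h => by
        have := hsub h; rw [Finset.mem_Icc] at this; omega
      refine ⟨insert (n+1) T, ?_, ?_⟩
      · simp only [Finset.mem_filter, Finset.mem_powersetCard]
        refine ⟨⟨⟨fun x hx => ?_, ?_⟩, fun k hk => ?_⟩, Finset.mem_insert_self _ _⟩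
        · rcases Finset.mem_insert.mp hx with h | h
          · subst h; rw [Finset.mem_Icc]; omega
          · have := hsub h; rw [Finset.mem_Icc] at this ⊢; omega
        · rw [Finset.card_insert_of_notMem hnot, hcard]; omega
        · rw [Finset.mem_Icc] at hk
          have hni : (n+1) ∉ Finset.Icc 1 (2*k-2) := by rw [Finset.mem_Icc]; omega
          rw [Finset.insert_inter_of_notMem hni]
          rcases eq_or_lt_of_le hk.2 with h | h
          · calc (T ∩ Finset.Icc 1 (2*k-2)).card ≤ T.card :=
                Finset.card_le_card Finset.inter_subset_left
              _ = d - 1 := hcard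
              _ = k - 1 := by omega
          · exact hP k (Finset.mem_Icc.mpr ⟨hk.1, by omega⟩)
      · rw [Finset.erase_insert hnot]
  rw [h1, h2]
  omega

lemma F_key (n : ℕ) : ∀ d, 2 ≤ d → 2 * d - 2 ≤ n → F n d + n.choose (d - 2) = n.choose d := by
  induction n with
  | zero => intro d hd h; omega
  | succ n ih =>
    intro d hd h
    rcases eq_or_lt_of_le h with heq | hlt
    · rw [← heq, F_base d hd]
      have hs : (2*d-2).choose (d-2) = (2*d-2).choose d := by
        rw [← Nat.choose_symm (show d ≤ 2*d-2 by omega)]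
        congr 1; omega
      omega
    · rw [F_rec n d hd (by omega)]
      rcases eq_or_lt_of_le hd with h2 | h3
      · rw [← h2]
        have e1 := F_one n
        have e2 := ih 2 le_rfl (by omega)
        have p1 : (n+1).choose 2 = n.choose 1 + n.choose 2 := Nat.choose_succ_succ n 1
        have p3 : n.choose 1 = n := Nat.choose_one_right n
        have z1 : (n+1).choose 0 = 1 := Nat.choose_zero_right _
        have z2 : n.choose 0 = 1 := Nat.choose_zero_right _
        simp only [show (2:ℕ)-1 = 1 from rfl, show (2:ℕ)-2 = 0 from rfl] at e2 ⊢
        omega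
      · have ih1 := ih d hd (by omega)
        have ih2 := ih (d-1) (by omega) (by omega)
        have e3 : d - 1 - 2 = d - 3 := by omega
        rw [e3] at ih2
        have p1 : (n+1).choose d = n.choose (d-1) + n.choose d := by
          obtain ⟨e, rfl⟩ : ∃ e, d = e + 1 := ⟨d-1, by omega⟩
          simp [Nat.choose_succ_succ]
        have p2 : (n+1).choose (d-2) = n.choose (d-3) + n.choose (d-2) := by
          have e4 : d - 2 = (d-3) + 1 := by omega
          rw [e4, Nat.choose_succ_succ]
        linarith

theorem good_subset_count (n d : ℕ) (hd : 2 ≤ d) (hn : 2 * d - 2 ≤ n) :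
    ((Finset.powersetCard d (Finset.Icc 1 n)).filter fun S =>
        ∀ k ∈ Finset.Icc 2 d, (S ∩ Finset.Icc 1 (2 * k - 2)).card ≤ k - 1).card =
      n.choose d - n.choose (d - 2) := by
  have key := F_key n d hd hn
  unfold F at key
  omega
end

section
/- Let E(n,d) denote the number of d-element subsets S of {1,...,n} such that |S ∩ {1,...,2k-2}| ≤ k-1 for every k with 2 ≤ k ≤ d. Then for n ≥ 2d-1 and d ≥ 2, E(n,d) = E(n-1,d) + E(n-1,d-1). -/
open scoped Classical

/-- `E n d` is the number of `d`-element subsets `S` of `{1,...,n}` such that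
`|S ∩ {1,...,2k-2}| ≤ k-1` for every `k` with `2 ≤ k ≤ d`. -/
noncomputable def E (n d : ℕ) : ℕ :=
  ((Finset.powersetCard d (Finset.Icc 1 n)).filter fun S =>
    ∀ k ∈ Finset.Icc 2 d, (S ∩ Finset.Icc 1 (2 * k - 2)).card ≤ k - 1).card

/-!
Split the `d`-subsets of `{1,...,n}` according to whether they contain `n`. Those that do not
are the `d`-subsets of `{1,...,n-1}`. Those that do are `insert n T` with `T` a `(d-1)`-subset of
`{1,...,n-1}`: since `n > 2d-2`, adding `n` changes none of the prefix intersections, and the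
constraint for `k = d` holds automatically because `|T| = d-1`.
-/

open Finset

theorem Finset.card_filter_powersetCard_succ_insert {α : Type*} [DecidableEq α] {x : α}
    {s : Finset α} (hx : x ∉ s) (k : ℕ) (p : Finset α → Prop) [DecidablePred p] :
    #{t ∈ powersetCard (k + 1) (insert x s) | p t} =
      #{t ∈ powersetCard (k + 1) s | p t} + #{t ∈ powersetCard k s | p (insert x t)} := by
  have hx_notMem {t : Finset α} {j : ℕ} (ht : t ∈ powersetCard j s) : x ∉ t :=
    fun h => hx ((mem_powersetCard.1 ht).1 h)
  have hinj : Set.InjOn (insert x) (powersetCard k s : Set (Finset α)) := fun t ht u hu h => by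
    rw [← erase_insert (hx_notMem ht), h, erase_insert (hx_notMem hu)]
  have hdisj : Disjoint (powersetCard (k + 1) s) ((powersetCard k s).image (insert x)) :=
    disjoint_left.2 fun t ht ht' => by
      obtain ⟨u, -, rfl⟩ := mem_image.1 ht'
      exact hx_notMem ht (mem_insert_self x u)
  rw [powersetCard_succ_insert hx, filter_union,
    card_union_of_disjoint (disjoint_filter_filter hdisj), filter_image,
    card_image_of_injOn (hinj.mono (filter_subset _ _))]

def IsAdmissible (d : ℕ) (S : Finset ℕ) : Prop :=
  ∀ k ∈ Icc 2 d, #(S ∩ Icc 1 (2 * k - 2)) ≤ k - 1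

theorem E_eq_card_filter_isAdmissible (n d : ℕ) :
    E n d = #{S ∈ powersetCard d (Icc 1 n) | IsAdmissible d S} :=
  rfl

theorem isAdmissible_succ_insert_iff {d n : ℕ} {T : Finset ℕ} (hn : 2 * d < n) (hT : #T = d) :
    IsAdmissible (d + 1) (insert n T) ↔ IsAdmissible d T := by
  have hinter (k : ℕ) (hk : k ∈ Icc 2 (d + 1)) :
      insert n T ∩ Icc 1 (2 * k - 2) = T ∩ Icc 1 (2 * k - 2) :=
    insert_inter_of_notMem (by simp only [mem_Icc] at hk ⊢; omega)
  constructor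
  · intro h k hk
    have hk' : k ∈ Icc 2 (d + 1) := Icc_subset_Icc_right (Nat.le_succ d) hk
    simpa only [hinter k hk'] using h k hk'
  · intro h k hk
    rw [hinter k hk]
    by_cases hkd : k ≤ d
    · exact h k (by simp only [mem_Icc] at hk ⊢; omega)
    · calc #(T ∩ Icc 1 (2 * k - 2)) ≤ #T := card_le_card inter_subset_left
        _ ≤ k - 1 := by omega

theorem E_recurrence (n d : ℕ) (hd : 2 ≤ d) (hn : 2 * d - 1 ≤ n) :
    E n d = E (n - 1) d + E (n - 1) (d - 1) := by
  obtain ⟨m, rfl⟩ : ∃ m, n = m + 1 := ⟨n - 1, by omega⟩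
  obtain ⟨k, rfl⟩ : ∃ k, d = k + 1 := ⟨d - 1, by omega⟩
  simp only [E_eq_card_filter_isAdmissible, Nat.add_sub_cancel]
  rw [← insert_Icc_right_eq_Icc_add_one (by omega : 1 ≤ m + 1),
    card_filter_powersetCard_succ_insert (by simp)]
  congr 1
  exact congrArg card <| filter_congr fun T hT =>
    isAdmissible_succ_insert_iff (by omega : 2 * k < m + 1) (mem_powersetCard.1 hT).2
end

section
/- Let n = 3d-5 with d ≥ 3. The number T(n,d) of lattice paths of n steps (each step (±1, +1)) that first cross the line x = n+2-2d and then later cross the line x = 0 equals n. -/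
open scoped Classical

/-- The `x`-coordinate after `j` of the `n` free steps of a lattice path that starts
at `(0,0)`, whose (forced) first move is to the right, reaching `(1,1)`.  Each step
`s i = true` is a right move `(+1,+1)` and `s i = false` a left move `(-1,+1)`. -/
def pathPos (n : ℕ) (s : Fin n → Bool) (j : ℕ) : ℤ :=
  1 + ∑ i ∈ Finset.univ.filter (fun i : Fin n => (i : ℕ) < j),
    (if s i then (1 : ℤ) else -1)

/-!
Write `x(j)` for the position after `j` free steps, and let the path cross at times `t₁ < t₂`.
Compare it with the template that steps right before `t₁`, left on `[t₁, t₂)` and right from `t₂`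
on. Twice the number of steps where the two differ equals `n + 1 - x(n) + 2 x(t₂) - 2 x(t₁)`,
which the crossing conditions make `2` when `n = 3d - 5`: the path is the template with exactly
one step flipped. Given the position `q` of that step, the two positions `x(t₁) = d - 2` and
`x(t₂) = -1` leave only `t₁ ∈ {d - 3, d - 1}` and `t₂ ∈ {2d - 4, 2d - 2}`; taking first crossing
times, `q` determines the path, and each `q < n` occurs once.
-/

open Finset

theorem pathPos_eq_sum_range {n j : ℕ} (f : ℕ → Bool) (hj : j ≤ n) :
    pathPos n (fun i => f i) j = 1 + ∑ i ∈ range j, if f i then (1 : ℤ) else -1 := by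
  rw [pathPos, sum_filter, Fin.sum_univ_eq_sum_range (fun i => if i < j then
    (if f i then (1 : ℤ) else -1) else 0), ← sum_filter]
  congr 2
  ext i; simp only [mem_filter, mem_range]; omega

def threeSegment (t₁ t₂ i : ℕ) : Bool := decide (i < t₁ ∨ t₂ ≤ i)

def threeSegmentFlip (t₁ t₂ q i : ℕ) : Bool := xor (threeSegment t₁ t₂ i) (decide (i = q))

theorem threeSegmentFlip_eq_decide (t₁ t₂ q i : ℕ) :
    threeSegmentFlip t₁ t₂ q i = decide ((i < t₁ ∨ t₂ ≤ i) ↔ i ≠ q) := by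
  rw [threeSegmentFlip, threeSegment, Bool.eq_iff_iff, Bool.xor_iff_ne, decide_eq_true_eq, Ne,
    decide_eq_decide]
  tauto

theorem sum_threeSegmentFlip {t₁ t₂ : ℕ} (q j : ℕ) (h : t₁ ≤ t₂) :
    ∑ i ∈ range j, (if threeSegmentFlip t₁ t₂ q i then (1 : ℤ) else -1) =
      j - 2 * (min j t₂ - min j t₁ : ℕ) +
        if q < j then (if t₁ ≤ q ∧ q < t₂ then 2 else -2) else 0 := by
  induction j with
  | zero => simp
  | succ j ih =>
    rw [sum_range_succ, ih]
    simp only [threeSegmentFlip_eq_decide, decide_eq_true_eq]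
    split_ifs <;> omega

theorem two_mul_ite_ne (a b : Bool) :
    (2 : ℤ) * (if a ≠ b then 1 else 0) = 1 - (if a then 1 else -1) * (if b then 1 else -1) := by
  cases a <;> cases b <;> rfl

theorem two_mul_hammingDist_threeSegment {n t₁ t₂ : ℕ} (s : Fin n → Bool) (h : t₁ ≤ t₂) :
    2 * (hammingDist s (fun i => threeSegment t₁ t₂ i) : ℤ) =
      n + 1 - pathPos n s n + 2 * pathPos n s t₂ - 2 * pathPos n s t₁ := by
  set σ : Fin n → ℤ := fun i => if s i then 1 else -1
  calc 2 * (hammingDist s (fun i => threeSegment t₁ t₂ i) : ℤ)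
      = ∑ i, (1 - σ i * if threeSegment t₁ t₂ i then 1 else -1) := by
        simp only [hammingDist, card_filter, Nat.cast_sum, mul_sum, Nat.cast_ite, Nat.cast_one,
          Nat.cast_zero, two_mul_ite_ne, σ]
    _ = ∑ i, (1 - σ i + 2 * (if (i : ℕ) < t₂ then σ i else 0)
          - 2 * (if (i : ℕ) < t₁ then σ i else 0)) := by
        refine sum_congr rfl fun i _ => ?_
        simp only [threeSegment, decide_eq_true_eq]
        split_ifs <;> omega
    _ = _ := by
        simp only [sum_sub_distrib, sum_add_distrib, ← mul_sum, pathPos, sum_filter, Fin.is_lt,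
          if_true, sum_const, card_univ, Fintype.card_fin, nsmul_eq_mul, mul_one]
        ring

theorem exists_eq_xor_of_hammingDist_eq_one {ι : Type*} [Fintype ι] [DecidableEq ι]
    {s τ : ι → Bool} (h : hammingDist s τ = 1) : ∃ q, ∀ i, s i = xor (τ i) (decide (i = q)) := by
  obtain ⟨q, hq⟩ := card_eq_one.mp h
  refine ⟨q, fun i => ?_⟩
  have hi : s i ≠ τ i ↔ i = q := by simpa using Finset.ext_iff.mp hq i
  by_cases hiq : i = q <;> cases hs : s i <;> cases ht : τ i <;> simp_all

def firstCrossing (d p : ℕ) : ℕ := if p < d - 3 then d - 1 else d - 3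

def secondCrossing (d p : ℕ) : ℕ := if p < 2 * d - 4 then 2 * d - 2 else 2 * d - 4

-- The crossing times are the first hitting times of `x = d - 2` and, after it, of `x = -1`;
-- with this choice the path determines `p`.
def defectPath (d p : ℕ) : ℕ → Bool := threeSegmentFlip (firstCrossing d p) (secondCrossing d p) p

theorem defectPath_injOn (d n : ℕ) :
    Set.InjOn (fun p (i : Fin n) => defectPath d p i) (range n) := by
  intro p hp p' hp' h
  have h₁ := congrFun h ⟨p, mem_range.mp hp⟩
  have h₂ := congrFun h ⟨p', mem_range.mp hp'⟩
  simp only [defectPath, threeSegmentFlip_eq_decide, decide_eq_decide, firstCrossing,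
    secondCrossing] at h₁ h₂
  split_ifs at h₁ h₂ <;> omega

theorem defectPath_crosses {d n p : ℕ} (hd : 3 ≤ d) (hn : n = 3 * d - 5) (hp : p < n) :
    pathPos n (fun i => defectPath d p i) n = (n : ℤ) + 1 - 2 * d ∧
      ∃ t₁ t₂ : ℕ, t₁ < t₂ ∧ t₂ ≤ n ∧
        pathPos n (fun i => defectPath d p i) t₁ = (n : ℤ) + 3 - 2 * d ∧
        pathPos n (fun i => defectPath d p i) t₂ = -1 := by
  have h₁₂ : firstCrossing d p < secondCrossing d p := by
    unfold firstCrossing secondCrossing; split_ifs <;> omega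
  have h₂ : secondCrossing d p ≤ n := by unfold secondCrossing; split_ifs <;> omega
  refine ⟨?_, firstCrossing d p, secondCrossing d p, h₁₂, h₂, ?_⟩ <;>
  simp only [defectPath, pathPos_eq_sum_range _ le_rfl, pathPos_eq_sum_range _ h₂,
    pathPos_eq_sum_range _ (h₁₂.le.trans h₂), sum_threeSegmentFlip _ _ h₁₂.le] <;>
  unfold firstCrossing secondCrossing <;>
  split_ifs <;> omega

theorem exists_defectPath_eq_threeSegmentFlip {d n t₁ t₂ q : ℕ} (hd : 3 ≤ d) (hn : n = 3 * d - 5)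
    (h₁₂ : t₁ ≤ t₂) (h₂ : t₂ ≤ n) (hq : q < n)
    (hpos₁ : pathPos n (fun i => threeSegmentFlip t₁ t₂ q i) t₁ = (n : ℤ) + 3 - 2 * d)
    (hpos₂ : pathPos n (fun i => threeSegmentFlip t₁ t₂ q i) t₂ = -1) :
    ∃ p < n, defectPath d p = threeSegmentFlip t₁ t₂ q := by
  rw [pathPos_eq_sum_range _ (h₁₂.trans h₂), sum_threeSegmentFlip _ _ h₁₂] at hpos₁
  rw [pathPos_eq_sum_range _ h₂, sum_threeSegmentFlip _ _ h₁₂] at hpos₂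
  have ht₁ : t₁ = d - 3 ∧ d - 3 ≤ q ∨ t₁ = d - 1 ∧ q < d - 1 := by
    split_ifs at hpos₁ <;> omega
  have ht₂ : t₂ = 2 * d - 4 ∧ 2 * d - 4 ≤ q ∨ t₂ = 2 * d - 2 ∧ q < 2 * d - 2 := by
    split_ifs at hpos₁ hpos₂ <;> omega
  clear hpos₁ hpos₂
  -- A path with `t₁ = d - 1` and `q ∈ {d - 3, d - 2}` already crossed at `d - 3`, and is the
  -- flip of the template for `(d - 3, t₂)` at the other of the two positions; likewise at `t₂`.
  refine ⟨if t₁ = d - 1 ∧ d - 3 ≤ q then 2 * d - 5 - q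
    else if t₂ = 2 * d - 2 ∧ 2 * d - 4 ≤ q then 4 * d - 7 - q else q, ?_, ?_⟩
  · split_ifs <;> omega
  · funext i
    simp only [defectPath, threeSegmentFlip_eq_decide, decide_eq_decide, firstCrossing,
      secondCrossing]
    split_ifs <;> omega

theorem exists_defectPath_of_crosses {d n : ℕ} (hd : 3 ≤ d) (hn : n = 3 * d - 5)
    {s : Fin n → Bool} (hend : pathPos n s n = (n : ℤ) + 1 - 2 * d) {t₁ t₂ : ℕ} (h₁₂ : t₁ < t₂)
    (h₂ : t₂ ≤ n) (hpos₁ : pathPos n s t₁ = (n : ℤ) + 3 - 2 * d) (hpos₂ : pathPos n s t₂ = -1) :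
    ∃ p < n, (fun i : Fin n => defectPath d p i) = s := by
  have hdist : hammingDist s (fun i => threeSegment t₁ t₂ i) = 1 := by
    have := two_mul_hammingDist_threeSegment s h₁₂.le
    rw [hend, hpos₁, hpos₂] at this
    omega
  obtain ⟨q, hq⟩ := exists_eq_xor_of_hammingDist_eq_one hdist
  obtain rfl : s = fun i : Fin n => threeSegmentFlip t₁ t₂ q i := by
    funext i
    simp [hq, threeSegmentFlip, Fin.val_inj]
  obtain ⟨p, hp, hpq⟩ :=
    exists_defectPath_eq_threeSegmentFlip hd hn h₁₂.le h₂ q.isLt hpos₁ hpos₂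
  exact ⟨p, hp, by rw [hpq]⟩

/-- For `n = 3d-5`, there are exactly `n` lattice paths (from `(0,0)` to
`(n+2-2d, n+2)`, with first and last moves to the right, encoded by its `n` free
steps) that first crosses the line `x = n+2-2d` (i.e. reaches `x = n+3-2d`) and
subsequently crosses the line `x = 0` (i.e. reaches `x = -1`). -/
theorem lattice_path_count_n (d : ℕ) (hd : 3 ≤ d) (n : ℕ) (hn : n = 3 * d - 5) :
    ((Finset.univ : Finset (Fin n → Bool)).filter fun s =>
        pathPos n s n = (n : ℤ) + 1 - 2 * d ∧
        ∃ t₁ t₂ : ℕ, t₁ < t₂ ∧ t₂ ≤ n ∧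
          pathPos n s t₁ = (n : ℤ) + 3 - 2 * d ∧ pathPos n s t₂ = -1).card = n := by
  calc _ = ((range n).image fun p (i : Fin n) => defectPath d p i).card := by
        congr 1
        ext s
        simp only [mem_filter, mem_univ, true_and, mem_image, mem_range]
        constructor
        · rintro ⟨hend, t₁, t₂, h₁₂, h₂, hpos₁, hpos₂⟩
          exact exists_defectPath_of_crosses hd hn hend h₁₂ h₂ hpos₁ hpos₂
        · rintro ⟨p, hp, rfl⟩
          exact defectPath_crosses hd hn hp
    _ = n := by rw [card_image_of_injOn (defectPath_injOn d n), card_range]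
end

section
/- Let d ≥ 2 and n = 2d-2. Suppose S ⊆ {1,...,n} satisfies |S| ≤ d-2 and |S ∩ {1,...,2k-2}| ≤ k-1 for all 2 ≤ k ≤ d. Then there exists j ∈ {1,...,n} \ S such that S ∪ {j} also satisfies |（S∪{j}) ∩ {1,...,2k-2}| ≤ k-1 for all 2 ≤ k ≤ d. -/
/-!
Add the largest `j ≤ n` missing from `S`. For a `k` with `j > 2k - 2` the constraint at `k` is
unaffected. If `j ≤ 2k - 2`, then `S` contains all of `2k - 1, …, n`, i.e. `2d - 2k` elements
above `2k - 2`, so `|S| ≤ d - 2` leaves at most `2k - d - 2 ≤ k - 2` elements of `S` in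
`{1, …, 2k - 2}`, and adding `j` keeps that count at most `k - 1`.
-/

open Finset

namespace Finset

theorem Icc_succ_subset_of_forall_le {S : Finset ℕ} {j n : ℕ}
    (hj : ∀ m ∈ Icc 1 n \ S, m ≤ j) : Icc (j + 1) n ⊆ S := by
  intro m hm
  by_contra hmS
  have hmj := hj m (mem_sdiff.mpr ⟨by grind, hmS⟩)
  grind

theorem card_inter_Icc_add_le_card {S : Finset ℕ} {m n : ℕ} (h : Icc (m + 1) n ⊆ S) :
    #(S ∩ Icc 1 m) + (n - m) ≤ #S := by
  have hdisj : Disjoint (S ∩ Icc 1 m) (Icc (m + 1) n) :=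
    disjoint_left.mpr fun a ha hb => by grind
  calc #(S ∩ Icc 1 m) + (n - m) = #(S ∩ Icc 1 m ∪ Icc (m + 1) n) := by
        rw [card_union_of_disjoint hdisj, Nat.card_Icc]; omega
    _ ≤ #S := card_le_card (union_subset inter_subset_left h)

end Finset

theorem good_subset_extend_one (d : ℕ) (hd : 2 ≤ d) (n : ℕ) (hn : n = 2 * d - 2)
    (S : Finset ℕ) (hS : S ⊆ Finset.Icc 1 n) (hScard : S.card ≤ d - 2)
    (hgood : ∀ k, 2 ≤ k → k ≤ d → (S ∩ Finset.Icc 1 (2 * k - 2)).card ≤ k - 1) :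
    ∃ j ∈ Finset.Icc 1 n, j ∉ S ∧
      ∀ k, 2 ≤ k → k ≤ d →
        ((insert j S) ∩ Finset.Icc 1 (2 * k - 2)).card ≤ k - 1 := by
  have hfree : (Icc 1 n \ S).Nonempty := by
    rw [← card_pos, card_sdiff_of_subset hS, Nat.card_Icc]
    omega
  obtain ⟨j, hjfree, hjmax⟩ := exists_max_image (Icc 1 n \ S) id hfree
  obtain ⟨hjn, hjS⟩ := mem_sdiff.mp hjfree
  refine ⟨j, hjn, hjS, fun k hk hkd => ?_⟩
  by_cases hjk : j ∈ Icc 1 (2 * k - 2)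
  · have htail : Icc (2 * k - 2 + 1) n ⊆ S :=
      (Icc_subset_Icc_left (by grind)).trans (Icc_succ_subset_of_forall_le hjmax)
    have hcount := card_inter_Icc_add_le_card htail
    rw [insert_inter_of_mem hjk]
    have hinsert := card_insert_le j (S ∩ Icc 1 (2 * k - 2))
    omega
  · rw [insert_inter_of_notMem hjk]
    exact hgood k hk hkd
end

section
/- Let d ≥ 3, n ≥ 3d-2, and let S ⊆ {1,...,n} be a set of size d-1 with |S ∩ {1,...,2k-2}| ≤ k-1 for all 2 ≤ k ≤ d. Then there exists a set M ⊆ {1,...,n} with S ⊆ M, |M| = 2d-1, and |M ∩ {1,...,2k-2}| ≤ k-1 for all 2 ≤ k ≤ d. -/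
/-!
Take `M = S ∪ T`, where `T` consists of the `d` largest elements of `[1, n] \ S`. For a given `k`,
either `T` misses `[1, 2k-2]`, so that `M ∩ [1, 2k-2] = S ∩ [1, 2k-2]`, or `M` contains all of
`(2k-2, n]`, which has at least `3d - 2k` elements; then at most `2k - d - 1 ≤ k - 1` elements of
`M` are left in `[1, 2k-2]`.
-/

open Finset

theorem Finset.exists_upwardClosed_subset_card_eq {α : Type*} [LinearOrder α]
    (C : Finset α) {d : ℕ} (hd : d ≤ #C) :
    ∃ T ⊆ C, #T = d ∧ ∀ x ∈ T, ∀ y ∈ C, x ≤ y → y ∈ T := by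
  classical
  induction C using Finset.induction_on_max generalizing d with
  | empty => exact ⟨∅, subset_rfl, by simp_all, by simp⟩
  | insert a s hlt ih =>
    have has : a ∉ s := fun h => lt_irrefl a (hlt a h)
    rw [card_insert_of_notMem has] at hd
    obtain _ | d := d
    · exact ⟨∅, empty_subset _, rfl, by simp⟩
    obtain ⟨T, hTs, hTcard, hTup⟩ := ih (Nat.le_of_succ_le_succ hd)
    refine ⟨insert a T, insert_subset_insert a hTs, ?_, ?_⟩
    · rw [card_insert_of_notMem (fun h => has (hTs h)), hTcard]
    · intro x hx y hy hxy
      rcases mem_insert.mp hy with rfl | hys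
      · exact mem_insert_self _ _
      rcases mem_insert.mp hx with rfl | hxT
      · exact absurd (hlt y hys) (not_lt.mpr hxy)
      · exact mem_insert_of_mem (hTup x hxT y hys hxy)

theorem inter_Icc_eq_empty_or_Ioc_subset_union {S T : Finset ℕ} {n : ℕ}
    (hup : ∀ x ∈ T, ∀ y ∈ Icc 1 n \ S, x ≤ y → y ∈ T) (a : ℕ) :
    T ∩ Icc 1 a = ∅ ∨ Ioc a n ⊆ S ∪ T := by
  refine or_iff_not_imp_left.mpr fun hne y hy => ?_
  obtain ⟨x, hx⟩ := nonempty_iff_ne_empty.mpr hne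
  simp only [mem_inter, mem_Icc] at hx
  simp only [mem_Ioc] at hy
  by_cases hyS : y ∈ S
  · exact mem_union_left T hyS
  · have hyC : y ∈ Icc 1 n \ S := mem_sdiff.mpr ⟨mem_Icc.mpr ⟨by omega, hy.2⟩, hyS⟩
    exact mem_union_right S (hup x hx.1 y hyC (by omega))

theorem card_inter_Icc_add_of_Ioc_subset {M : Finset ℕ} {n a : ℕ} (hM : M ⊆ Icc 1 n)
    (h : Ioc a n ⊆ M) : #(M ∩ Icc 1 a) + (n - a) = #M := by
  have hsplit : M = (M ∩ Icc 1 a) ∪ Ioc a n := by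
    ext y
    have hMy := @hM y
    have hy := @h y
    simp only [mem_union, mem_inter, mem_Icc, mem_Ioc] at hMy hy ⊢
    constructor
    · intro hyM
      by_cases hya : y ≤ a
      · exact Or.inl ⟨hyM, (hMy hyM).1, hya⟩
      · exact Or.inr ⟨by omega, (hMy hyM).2⟩
    · rintro (⟨hyM, -⟩ | hya)
      exacts [hyM, hy hya]
  rw [hsplit, card_union_of_disjoint, Nat.card_Ioc, ← hsplit]
  · rw [disjoint_left]
    simp only [mem_inter, mem_Icc, mem_Ioc]
    omega

theorem good_subset_extend_to_large_general (d : ℕ) (n : ℕ) (hn : 3 * d - 2 ≤ n)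
    (S : Finset ℕ) (hS : S ⊆ Finset.Icc 1 n) (hScard : S.card = d - 1)
    (hgood : ∀ k, 2 ≤ k → k ≤ d → (S ∩ Finset.Icc 1 (2 * k - 2)).card ≤ k - 1) :
    ∃ M : Finset ℕ, M ⊆ Finset.Icc 1 n ∧ S ⊆ M ∧ M.card = 2 * d - 1 ∧
      ∀ k, 2 ≤ k → k ≤ d → (M ∩ Finset.Icc 1 (2 * k - 2)).card ≤ k - 1 := by
  have hC : d ≤ #(Icc 1 n \ S) := by
    rw [card_sdiff_of_subset hS, Nat.card_Icc, hScard]; omega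
  obtain ⟨T, hTC, hTcard, hup⟩ := (Icc 1 n \ S).exists_upwardClosed_subset_card_eq hC
  have hdisj : Disjoint S T := disjoint_of_subset_right hTC disjoint_sdiff
  have hM : S ∪ T ⊆ Icc 1 n := union_subset hS (hTC.trans sdiff_subset)
  have hMcard : #(S ∪ T) = 2 * d - 1 := by
    rw [card_union_of_disjoint hdisj, hScard, hTcard]; omega
  refine ⟨S ∪ T, hM, subset_union_left, hMcard, fun k hk2 hkd => ?_⟩
  rcases inter_Icc_eq_empty_or_Ioc_subset_union hup (2 * k - 2) with hlow | hhigh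
  · rw [union_inter_distrib_right, hlow, union_empty]
    exact hgood k hk2 hkd
  · have := card_inter_Icc_add_of_Ioc_subset hM hhigh
    omega

theorem good_subset_extend_to_large (d : ℕ) (hd : 3 ≤ d) (n : ℕ) (hn : 3 * d - 2 ≤ n)
    (S : Finset ℕ) (hS : S ⊆ Finset.Icc 1 n) (hScard : S.card = d - 1)
    (hgood : ∀ k, 2 ≤ k → k ≤ d → (S ∩ Finset.Icc 1 (2 * k - 2)).card ≤ k - 1) :
    ∃ M : Finset ℕ, M ⊆ Finset.Icc 1 n ∧ S ⊆ M ∧ M.card = 2 * d - 1 ∧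
      ∀ k, 2 ≤ k → k ≤ d → (M ∩ Finset.Icc 1 (2 * k - 2)).card ≤ k - 1 :=
  good_subset_extend_to_large_general d n hn S hS hScard hgood
end

section
/- For d ≥ 3 and n ≥ 3d-3, one has C(n,d) - C(n,d-2) ≥ C(n,d-1) - C(n,d-3), i.e., the Hilbert function of F[x_1,...,x_n]/(x_1^2,...,x_n^2,(x_1+...+x_n)^2) is at least as large in degree d as in degree d-1. -/
/-!
Since `(1 + x)^n (1 - x)(1 - x^2) = (1 + x)^(n+1) (1 - x)^2`, the difference of the two sides is the
second difference `C(n+1, d) - 2 C(n+1, d-1) + C(n+1, d-2)`, so the claim is convexity of the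
binomial row `n + 1` at `d - 1`. Expressing the three coefficients through `C(N, i)` via
`C(N, i+1) (i+1) = C(N, i) (N-i)`, convexity at `i + 1` becomes the quadratic inequality
`m (m - 1) + (i+1)(i+2) ≥ 2 m (i+2)` in `m = N - i`, which holds once `m ≥ 2i + 4` and `i ≥ 1`.
-/

namespace Nat

theorem two_mul_choose_succ_le_of_quadratic {N i : ℕ}
    (h : 2 * (N - i) * (i + 2) ≤ (N - i) * (N - i - 1) + (i + 1) * (i + 2)) :
    2 * N.choose (i + 1) ≤ N.choose (i + 2) + N.choose i := by
  have h₁ : N.choose (i + 1) * (i + 1) = N.choose i * (N - i) := choose_succ_right_eq N i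
  have h₂ : N.choose (i + 2) * (i + 2) = N.choose (i + 1) * (N - i - 1) := by
    rw [choose_succ_right_eq, Nat.sub_add_eq]
  have h₃ : N.choose (i + 2) * ((i + 1) * (i + 2)) = N.choose i * ((N - i) * (N - i - 1)) := by
    linear_combination (i + 1) * h₂ + (N - i - 1) * h₁
  refine Nat.le_of_mul_le_mul_right ?_ (show 0 < (i + 1) * (i + 2) by positivity)
  calc 2 * N.choose (i + 1) * ((i + 1) * (i + 2)) = N.choose i * (2 * (N - i) * (i + 2)) := by
        linear_combination 2 * (i + 2) * h₁
    _ ≤ N.choose i * ((N - i) * (N - i - 1) + (i + 1) * (i + 2)) := Nat.mul_le_mul_left _ h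
    _ = (N.choose (i + 2) + N.choose i) * ((i + 1) * (i + 2)) := by linear_combination -h₃

theorem two_mul_choose_succ_le {N i : ℕ} (hi : 1 ≤ i) (hN : 3 * i + 4 ≤ N) :
    2 * N.choose (i + 1) ≤ N.choose (i + 2) + N.choose i := by
  apply two_mul_choose_succ_le_of_quadratic
  obtain ⟨t, ht⟩ : ∃ t, N - i = 2 * i + 4 + t := ⟨N - i - (2 * i + 4), by omega⟩
  obtain ⟨s, rfl⟩ : ∃ s, i = s + 1 := ⟨i - 1, by omega⟩
  rw [ht, show 2 * (s + 1) + 4 + t - 1 = 2 * s + 5 + t by omega]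
  nlinarith

theorem choose_second_difference_succ (n k : ℕ) :
    ((n.choose (k + 3) : ℤ) - n.choose (k + 1)) - (n.choose (k + 2) - n.choose k) =
      (n + 1).choose (k + 3) + (n + 1).choose (k + 1) - 2 * (n + 1).choose (k + 2) := by
  simp only [choose_succ_succ', cast_add]
  ring

end Nat

theorem hilbert_function_increasing (d n : ℕ) (hd : 3 ≤ d) (hn : 3 * d - 3 ≤ n) :
    (n.choose (d - 1) : ℤ) - n.choose (d - 3) ≤ (n.choose d : ℤ) - n.choose (d - 2) := by
  obtain ⟨k, rfl⟩ : ∃ k, d = k + 3 := ⟨d - 3, by omega⟩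
  have hconvex := Nat.two_mul_choose_succ_le (N := n + 1) (i := k + 1) (by omega) (by omega)
  have hdiff := Nat.choose_second_difference_succ n k
  simp only [Nat.add_sub_cancel, show k + 3 - 1 = k + 2 by omega, show k + 3 - 2 = k + 1 by omega]
  zify at hconvex
  linarith
end
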